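/- arXiv:1406.1766 — 5 statements merged into one kernel-verified Lean document; each statement's English description precedes it below -/
import Mathlib

section
/- Every (Q_n, Q_m)-semi-saturated graph with m ≥ 2 is connected, and hence has at least 2^n − 1 edges. -/
/-- The hypercube graph `Q_n` on vertex set `{0,1}^n`. -/
def Qc (n : ℕ) : SimpleGraph (Fin n → ZMod 2) :=
  SimpleGraph.fromRel (fun x y => hammingDist x y = 1)

/-- `f` is an (injective, edge-preserving) copy of the cube `Q_m` in the graph `G`. -/
def IsCubeCopy (m : ℕ) {V : Type*} (G : SimpleGraph V) (f : (Fin m → ZMod 2) → V) : Prop :=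
  Function.Injective f ∧ ∀ x y, (Qc m).Adj x y → G.Adj (f x) (f y)

/-- `G` contains a copy of the cube `Q_m`. -/
def ContainsCube (m : ℕ) {V : Type*} (G : SimpleGraph V) : Prop :=
  ∃ f, IsCubeCopy m G f

/-- `G` is `Q_m`-free. -/
def CubeFree (m : ℕ) {V : Type*} (G : SimpleGraph V) : Prop :=
  ¬ ContainsCube m G

/-- Adding the edge `e` to `G` creates a new copy of `Q_m`. -/
def NewCube (m : ℕ) {V : Type*} (G : SimpleGraph V) (e : Sym2 V) : Prop :=
  ∃ f, IsCubeCopy m (G ⊔ SimpleGraph.fromEdgeSet {e}) f ∧ ¬ IsCubeCopy m G f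

/-- `G` is `(Q_n, Q_m)`-semi-saturated. -/
def SemiSaturated (n m : ℕ) (G : SimpleGraph (Fin n → ZMod 2)) : Prop :=
  G ≤ Qc n ∧ ∀ e ∈ (Qc n).edgeSet, e ∉ G.edgeSet → NewCube m G e

/-- `G` is `(Q_n, Q_m)`-saturated. -/
def Saturated (n m : ℕ) (G : SimpleGraph (Fin n → ZMod 2)) : Prop :=
  G ≤ Qc n ∧ CubeFree m G ∧
    ∀ e ∈ (Qc n).edgeSet, e ∉ G.edgeSet → ContainsCube m (G ⊔ SimpleGraph.fromEdgeSet {e})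

/-!
A missing edge `xy` of `Q_n` must be the image of an edge `ab` of the new copy of `Q_m`, and
the copy is new only if that edge is used. Since `m ≥ 2`, the edge `ab` lies on a 4-cycle
`a a' b' b` of `Q_m` whose other three edges are mapped to old edges, that is edges of `G`;
so `x` and `y` are joined in `G`. Hence `G` is connected because `Q_n` is, and a connected
graph on `2^n` vertices has at least `2^n - 1` edges.
-/

namespace SimpleGraph

variable {V : Type*} {G H : SimpleGraph V}

lemma Reachable.of_adj_reachable (h : ∀ x y, H.Adj x y → G.Reachable x y) {x y : V}
    (hxy : H.Reachable x y) : G.Reachable x y := by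
  obtain ⟨p⟩ := hxy
  induction p with
  | nil => rfl
  | cons hadj _ ih => exact (h _ _ hadj).trans ih

lemma Preconnected.of_adj_reachable (hH : H.Preconnected)
    (h : ∀ x y, H.Adj x y → G.Reachable x y) : G.Preconnected :=
  fun x y => (hH x y).of_adj_reachable h

end SimpleGraph

lemma hammingNorm_eq_one_iff {ι : Type*} [Fintype ι] [DecidableEq ι] {z : ι → ZMod 2} :
    hammingNorm z = 1 ↔ ∃ i, z = Pi.single i 1 := by
  rw [hammingNorm, Finset.card_eq_one]
  refine exists_congr fun i => ⟨fun h => funext fun j => ?_, fun h => ?_⟩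
  · have hj := Finset.ext_iff.1 h j
    simp only [Finset.mem_filter, Finset.mem_univ, true_and, Finset.mem_singleton] at hj
    by_cases hji : j = i
    · subst hji
      simpa using (show ∀ a : ZMod 2, a ≠ 0 → a = 1 by decide) _ (hj.2 rfl)
    · simpa [hji] using hj
  · ext j
    by_cases hji : j = i <;> simp [h, Pi.single_apply, hji]

lemma qc_adj {k : ℕ} {x y : Fin k → ZMod 2} : (Qc k).Adj x y ↔ ∃ i, y = x + Pi.single i 1 := by
  rw [Qc, SimpleGraph.fromRel_adj, hammingDist_comm y x, or_self, hammingDist_eq_hammingNorm,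
    hammingNorm_eq_one_iff]
  refine ⟨fun ⟨_, i, hi⟩ => ⟨i, by rw [← hi]; abel⟩, fun ⟨i, hi⟩ => ⟨?_, i, by rw [hi]; abel⟩⟩
  rintro rfl
  simpa using congrFun (left_eq_add.1 hi) i

lemma qc_reachable_add_sum_single {n : ℕ} (x z : Fin n → ZMod 2) (s : Finset (Fin n)) :
    (Qc n).Reachable x (x + ∑ i ∈ s, Pi.single i (z i)) := by
  induction s using Finset.induction_on with
  | empty => simp
  | insert j s hj ih =>
    have hsplit : x + ∑ i ∈ insert j s, Pi.single i (z i) =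
        (x + ∑ i ∈ s, Pi.single i (z i)) + Pi.single j (z j) := by
      rw [Finset.sum_insert hj]; abel
    rw [hsplit]
    refine ih.trans ?_
    rcases (show ∀ a : ZMod 2, a = 0 ∨ a = 1 by decide) (z j) with h | h <;> rw [h]
    · simp
    · exact (qc_adj.2 ⟨j, rfl⟩).reachable

lemma qc_preconnected (n : ℕ) : (Qc n).Preconnected := by
  intro x y
  have h := qc_reachable_add_sum_single x (-x + y) Finset.univ
  rwa [Finset.univ_sum_single, add_neg_cancel_left] at h

lemma qc_exists_square {m : ℕ} (hm : 2 ≤ m) {a b : Fin m → ZMod 2} (hab : (Qc m).Adj a b) :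
    ∃ a' b', (Qc m).Adj a a' ∧ (Qc m).Adj a' b' ∧ (Qc m).Adj b' b ∧ a' ≠ b ∧ b' ≠ a := by
  obtain ⟨i, rfl⟩ := qc_adj.1 hab
  have : Nontrivial (Fin m) := Fin.nontrivial_iff_two_le.mpr hm
  obtain ⟨j, hj⟩ := exists_ne i
  refine ⟨a + Pi.single j 1, a + Pi.single i 1 + Pi.single j 1, qc_adj.2 ⟨j, rfl⟩,
    qc_adj.2 ⟨i, by abel⟩, (qc_adj.2 ⟨j, rfl⟩).symm, fun h => ?_, fun h => ?_⟩
  · simpa [hj] using congrFun (add_left_cancel h) j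
  · have hi := congrFun (add_eq_left.1 (add_assoc a _ _ ▸ h)) i
    simp [hj.symm] at hi

lemma NewCube.reachable {V : Type*} {G : SimpleGraph V} {m : ℕ} (hm : 2 ≤ m) {x y : V}
    (h : NewCube m G s(x, y)) : G.Reachable x y := by
  obtain ⟨f, ⟨hinj, hadj⟩, hnew⟩ := h
  have hG : ∀ u v, (Qc m).Adj u v → s(f u, f v) ≠ s(x, y) → G.Adj (f u) (f v) := by
    intro u v huv hne
    simpa [hne] using hadj u v huv
  obtain ⟨a, b, hab, hGab⟩ : ∃ a b, (Qc m).Adj a b ∧ ¬ G.Adj (f a) (f b) := by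
    by_contra! hall
    exact hnew ⟨hinj, hall⟩
  have hxy : s(f a, f b) = s(x, y) := by_contra fun hne => hGab (hG a b hab hne)
  obtain ⟨a', b', haa', ha'b', hb'b, ha'b, hb'a⟩ := qc_exists_square hm hab
  have hG' : ∀ u v, (Qc m).Adj u v → s(u, v) ≠ s(a, b) → G.Adj (f u) (f v) :=
    fun u v huv hne => hG u v huv (hxy ▸ (Sym2.map.injective hinj).ne hne)
  have hne' : s(a', b') ≠ s(a, b) := by
    rintro h
    rcases Sym2.eq_iff.1 h with ⟨h', -⟩ | ⟨h', -⟩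
    exacts [haa'.ne' h', ha'b h']
  have hreach : G.Reachable (f a) (f b) :=
    ((hG' a a' haa' (mt Sym2.congr_right.1 ha'b)).reachable.trans
      (hG' a' b' ha'b' hne').reachable).trans
      (hG' b' b hb'b (mt Sym2.congr_left.1 hb'a)).reachable
  rcases Sym2.eq_iff.1 hxy with ⟨rfl, rfl⟩ | ⟨rfl, rfl⟩
  · exact hreach
  · exact hreach.symm

lemma SemiSaturated.connected {n m : ℕ} (hm : 2 ≤ m) {G : SimpleGraph (Fin n → ZMod 2)}
    (hsat : SemiSaturated n m G) : G.Connected := by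
  have hreach : ∀ x y, (Qc n).Adj x y → G.Reachable x y := by
    intro x y hxy
    by_cases hG : G.Adj x y
    · exact hG.reachable
    · exact (hsat.2 s(x, y) hxy hG).reachable hm
  exact ⟨(qc_preconnected n).of_adj_reachable hreach⟩

/-- Every `(Q_n, Q_m)`-semi-saturated graph with `m ≥ 2` is connected, and hence has at
least `2^n - 1` edges. -/
theorem stmt_2 (n m : ℕ) (hm : 2 ≤ m) (G : SimpleGraph (Fin n → ZMod 2))
    (hsat : SemiSaturated n m G) :
    G.Connected ∧ 2 ^ n - 1 ≤ G.edgeSet.ncard := by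
  have hconn := hsat.connected hm
  have hcard := hconn.card_vert_le_card_edgeSet_add_one
  rw [Nat.card_coe_set_eq] at hcard
  simp only [Nat.card_eq_fintype_card, Fintype.card_fun, ZMod.card, Fintype.card_fin] at hcard
  exact ⟨hconn, by omega⟩
end

section
/- For all n and all m ≥ 1, s-sat(Q_n, Q_m) < (m² + m/2) · 2^n, where s-sat(Q_n, Q_m) is the minimum number of edges of a (Q_n, Q_m)-semi-saturated subgraph of the hypercube Q_n. -/
/-!
For `m ≤ n` choose `ℓ` with `m·2^ℓ ≤ n < 2m·2^ℓ` and embed `m` disjoint blocks of coordinates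
into `Fin n`, the coordinates of block `t` labelled by the vectors `w` of `W = 𝔽₂^ℓ`. The
syndrome `σ_t(y) = ∑_w y_(t,w) • w` is a surjective additive map; `y` is a hub if some `σ_t(y)`
vanishes, and `G` keeps exactly the edges of `Q_n` that meet a hub.

Flipping coordinate `(t, σ_t(u))` of `u` gives a hub of block `t`. For a missing edge
`u ~ u + e_i`, these directions for the blocks `t` not containing `i`, together with `i`, span a
copy of `Q_m` through `u` in which every edge other than `u ~ u + e_i` meets a hub.

For the count, charge an edge in direction `j` meeting a hub of block `t` to that hub endpoint;
if `j` is outside block `t` both endpoints are hubs, and the one with `j`-coordinate `0` is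
charged. This gives at most `m (n + 2^ℓ) 2^(n-ℓ-1) < (m² + m/2) 2^n` edges. For `n < m` the
whole cube, with `n 2^(n-1)` edges, already works.
-/

open Finset Function

lemma zmod_two_eq_zero_or_one (x : ZMod 2) : x = 0 ∨ x = 1 := by
  revert x; decide

lemma AddMonoidHom.card_filter_eq_zero_mul_card {G H : Type*} [AddGroup G] [AddGroup H]
    [Fintype G] [DecidableEq H] (f : G →+ H) (hf : Surjective f) :
    #{x | f x = 0} * Nat.card H = Fintype.card G := by
  have hker : #{x | f x = 0} = Nat.card f.ker := by
    rw [← Fintype.card_subtype, ← Nat.card_eq_fintype_card]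
    rfl
  rw [hker, ← Nat.card_eq_fintype_card, ← f.ker.card_mul_index, AddSubgroup.index_ker,
    f.range_eq_top_of_surjective hf, AddSubgroup.card_top]

lemma card_filter_exists_apply_eq_le {α β : Type*} [Fintype α] [Fintype β] [DecidableEq β]
    (f : α → β) : #{b | ∃ a, f a = b} ≤ Fintype.card α :=
  calc #{b | ∃ a, f a = b} ≤ #(univ.image f) := card_le_card fun b hb => by simpa using hb
    _ ≤ Fintype.card α := card_image_le

section Cube

variable {n : ℕ}

lemma add_single_add_single (x : Fin n → ZMod 2) (j : Fin n) :
    x + Pi.single j 1 + Pi.single j 1 = x := by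
  rw [add_assoc, ZModModule.add_self, add_zero]

lemma add_single_ne_self (x : Fin n → ZMod 2) (j : Fin n) : x + Pi.single j 1 ≠ x := by
  simp [(Pi.single_ne_zero_iff.mpr one_ne_zero : (Pi.single j 1 : Fin n → ZMod 2) ≠ 0)]

lemma hammingNorm_eq_one_iff_s3 {d : Fin n → ZMod 2} : hammingNorm d = 1 ↔ ∃ j, d = Pi.single j 1 := by
  constructor
  · intro h
    obtain ⟨j, hj⟩ := card_eq_one.mp h
    refine ⟨j, funext fun i => ?_⟩
    have hi := Finset.ext_iff.mp hj i
    simp only [mem_filter, mem_univ, true_and, mem_singleton] at hi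
    by_cases hij : i = j
    · subst hij
      simpa using (zmod_two_eq_zero_or_one _).resolve_left (hi.mpr rfl)
    · simpa [hij] using hi
  · rintro ⟨j, rfl⟩
    simp [hammingNorm, Pi.single_apply, filter_eq']

lemma qc_adj_iff {x y : Fin n → ZMod 2} : (Qc n).Adj x y ↔ ∃ j, y = x + Pi.single j 1 := by
  have key : hammingDist x y = 1 ↔ ∃ j, y = x + Pi.single j 1 := by
    rw [hammingDist_eq_hammingNorm, hammingNorm_eq_one_iff_s3]
    simp only [neg_add_eq_iff_eq_add]
  simp only [Qc, SimpleGraph.fromRel_adj, hammingDist_comm y x, or_self, key]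
  constructor
  · exact And.right
  · rintro ⟨j, rfl⟩
    exact ⟨(add_single_ne_self x j).symm, j, rfl⟩

lemma qc_adj_add_single (x : Fin n → ZMod 2) (j : Fin n) : (Qc n).Adj x (x + Pi.single j 1) :=
  qc_adj_iff.mpr ⟨j, rfl⟩

end Cube

section Subcube

variable {m n : ℕ}

def subcube (c : Fin m → Fin n) (u : Fin n → ZMod 2) (a : Fin m → ZMod 2) : Fin n → ZMod 2 :=
  u + ∑ k, Pi.single (c k) (a k)

lemma subcube_zero (c : Fin m → Fin n) (u : Fin n → ZMod 2) : subcube c u 0 = u := by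
  simp [subcube]

lemma subcube_apply {c : Fin m → Fin n} (hc : Injective c) (u : Fin n → ZMod 2)
    (a : Fin m → ZMod 2) (k : Fin m) : subcube c u a (c k) = u (c k) + a k := by
  simp [subcube, Finset.sum_apply, Pi.single_apply, hc.eq_iff]

lemma subcube_injective {c : Fin m → Fin n} (hc : Injective c) (u : Fin n → ZMod 2) :
    Injective (subcube c u) := fun a b h =>
  funext fun k => by simpa [subcube_apply hc] using congrFun h (c k)

lemma subcube_add_single (c : Fin m → Fin n) (u : Fin n → ZMod 2) (a : Fin m → ZMod 2)
    (k : Fin m) : subcube c u (a + Pi.single k 1) = subcube c u a + Pi.single (c k) 1 := by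
  have hsum : ∑ k', Pi.single (c k') ((Pi.single k 1 : Fin m → ZMod 2) k') =
      (Pi.single (c k) 1 : Fin n → ZMod 2) := by
    rw [sum_eq_single k (fun k' _ hk' => by simp [hk']) (by simp)]
    simp
  simp only [subcube, Pi.add_apply, Pi.single_add, sum_add_distrib, hsum, add_assoc]

lemma isCubeCopy_subcube {G : SimpleGraph (Fin n → ZMod 2)} {c : Fin m → Fin n}
    (hc : Injective c) (u : Fin n → ZMod 2)
    (hG : ∀ a k, G.Adj (subcube c u a) (subcube c u a + Pi.single (c k) 1)) :
    IsCubeCopy m G (subcube c u) := by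
  refine ⟨subcube_injective hc u, fun a b hab => ?_⟩
  obtain ⟨k, rfl⟩ := qc_adj_iff.mp hab
  rw [subcube_add_single]
  exact hG a k

lemma newCube_of_subcube {G : SimpleGraph (Fin n → ZMod 2)} {H : Set (Fin n → ZMod 2)}
    (hG : ∀ x j, x ∈ H → G.Adj x (x + Pi.single j 1))
    {u : Fin n → ZMod 2} {i : Fin n} (hu : s(u, u + Pi.single i 1) ∉ G.edgeSet)
    {c : Fin m → Fin n} (hc : Injective c) {k₀ : Fin m} (hk₀ : c k₀ = i)
    (hH : ∀ a k, k ≠ k₀ → a k = 1 → subcube c u a ∈ H) :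
    NewCube m G s(u, u + Pi.single i 1) := by
  have hG' : ∀ x j, x + Pi.single j 1 ∈ H → G.Adj x (x + Pi.single j 1) := fun x j hx => by
    simpa [add_single_add_single] using (hG _ j hx).symm
  have hbase : subcube c u (Pi.single k₀ 1) = u + Pi.single i 1 := by
    rw [← zero_add (Pi.single k₀ 1), subcube_add_single, subcube_zero, hk₀]
  refine ⟨subcube c u, isCubeCopy_subcube hc u fun a k => ?_, fun hcopy => hu ?_⟩
  · rw [SimpleGraph.sup_adj]
    by_cases hk : k = k₀
    · subst hk
      by_cases hex : ∃ s ≠ k, a s = 1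
      · obtain ⟨s, hs, has⟩ := hex
        exact Or.inl (hG _ _ (hH a s hs has))
      · push Not at hex
        have ha : a = Pi.single k (a k) := funext fun s => by
          by_cases hs : s = k
          · subst hs; simp
          · simpa [hs] using (zmod_two_eq_zero_or_one (a s)).resolve_right (hex s hs)
        right
        refine ⟨?_, add_single_ne_self _ _ |>.symm⟩
        rw [Sym2.toRel_prop, Set.mem_singleton_iff, ← subcube_add_single]
        rcases zmod_two_eq_zero_or_one (a k) with h | h <;> rw [ha, h]
        · simp [subcube_zero, hbase]
        · rw [← Pi.single_add, ZModModule.add_self, Pi.single_zero, subcube_zero, hbase]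
          exact Sym2.eq_swap
    · left
      rcases zmod_two_eq_zero_or_one (a k) with h | h
      · apply hG'
        rw [← subcube_add_single]
        exact hH _ k hk (by simp [h])
      · exact hG _ _ (hH a k hk h)
  · have := hcopy.2 0 (Pi.single k₀ 1) (by simpa using qc_adj_add_single (0 : Fin m → ZMod 2) k₀)
    rwa [subcube_zero, hbase] at this

end Subcube

section HubGraph

variable {n : ℕ}

def hubGraph (H : Set (Fin n → ZMod 2)) : SimpleGraph (Fin n → ZMod 2) where
  Adj x y := (Qc n).Adj x y ∧ (x ∈ H ∨ y ∈ H)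
  symm := ⟨fun _ _ h => ⟨h.1.symm, h.2.symm⟩⟩
  loopless := ⟨fun _ h => h.1.ne rfl⟩

lemma hubGraph_le (H : Set (Fin n → ZMod 2)) : hubGraph H ≤ Qc n := fun _ _ h => h.1

end HubGraph

section Syndrome

variable {m n : ℕ} {W : Type*} [AddCommGroup W] [Module (ZMod 2) W] [Fintype W]

def syndrome (e : Fin m × W ↪ Fin n) (t : Fin m) : (Fin n → ZMod 2) →+ W where
  toFun y := ∑ w, y (e (t, w)) • w
  map_zero' := by simp
  map_add' y z := by simp [add_smul, sum_add_distrib]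

variable (e : Fin m × W ↪ Fin n)

lemma syndrome_single_self (t : Fin m) (w : W) (x : ZMod 2) :
    syndrome e t (Pi.single (e (t, w)) x) = x • w := by
  change ∑ w', _ = _
  rw [sum_eq_single w (fun w' _ hw' => by simp [hw']) (by simp)]
  simp

lemma syndrome_single_of_notMem {t : Fin m} {j : Fin n} (hj : ∀ w, e (t, w) ≠ j) (x : ZMod 2) :
    syndrome e t (Pi.single j x) = 0 := by
  simp [syndrome, hj]

lemma syndrome_surjective (t : Fin m) : Surjective (syndrome e t) :=
  fun w => ⟨Pi.single (e (t, w)) 1, by simp [syndrome_single_self]⟩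

def hubs : Set (Fin n → ZMod 2) := {y | ∃ t, syndrome e t y = 0}

theorem semiSaturated_hubGraph [NeZero m] : SemiSaturated n m (hubGraph (hubs e)) := by
  refine ⟨hubGraph_le _, fun ed hed hnot => ?_⟩
  induction ed using Sym2.ind with | _ u v => ?_
  obtain ⟨i, rfl⟩ := qc_adj_iff.mp (show (Qc n).Adj u v from hed)
  obtain ⟨t₀, ht₀⟩ : ∃ t₀, ∀ t ≠ t₀, ∀ w, e (t, w) ≠ i := by
    by_cases h : ∃ p, e p = i
    · obtain ⟨⟨t₀, w₀⟩, h⟩ := h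
      exact ⟨t₀, fun t ht w hw => ht (congrArg Prod.fst (e.injective (hw.trans h.symm)))⟩
    · push Not at h
      exact ⟨0, fun t _ w => h (t, w)⟩
  let c : Fin m → Fin n := fun t => if t = t₀ then i else e (t, syndrome e t u)
  have hc_block : ∀ k t, k ≠ t → ∀ w, c k ≠ e (t, w) := by
    intro k t hkt w
    by_cases hk : k = t₀
    · simpa [c, hk] using (ht₀ t (hk ▸ hkt.symm) w).symm
    · rw [show c k = e (k, syndrome e k u) from if_neg hk]
      exact fun h => hkt (congrArg Prod.fst (e.injective h))
  have hc : Injective c := by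
    intro k k' h
    by_contra hkk
    by_cases hk' : k' = t₀
    · exact hc_block k' k (Ne.symm hkk) (syndrome e k u) (by rw [← h]; simp [c, hk' ▸ hkk])
    · exact hc_block k k' hkk (syndrome e k' u) (by rw [h]; simp [c, hk'])
  refine newCube_of_subcube (G := hubGraph (hubs e)) (H := hubs e)
    (fun x j hx => ⟨qc_adj_add_single x j, Or.inl hx⟩) hnot hc (k₀ := t₀) (by simp [c])
    fun a t ht hat => ⟨t, ?_⟩
  have hdir : ∀ k, syndrome e t (Pi.single (c k) (a k)) = if k = t then syndrome e t u else 0 := by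
    intro k
    split_ifs with hk
    · subst hk
      simp [c, ht, syndrome_single_self, hat]
    · exact syndrome_single_of_notMem e (fun w h => hc_block k t hk w h.symm) _
  simp [subcube, map_sum, hdir, ZModModule.add_self]

end Syndrome

section Counting

variable {n : ℕ}

lemma ncard_edgeSet_le_sum_card {G : SimpleGraph (Fin n → ZMod 2)} (hG : G ≤ Qc n)
    (A : Fin n → Finset (Fin n → ZMod 2))
    (hA : ∀ x j, G.Adj x (x + Pi.single j 1) → x ∈ A j ∨ x + Pi.single j 1 ∈ A j) :
    G.edgeSet.ncard ≤ ∑ j, #(A j) := by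
  classical
  let edges := univ.biUnion fun j => (A j).image fun x => s(x, x + Pi.single j 1)
  have hsub : G.edgeSet ⊆ edges := by
    intro ed hed
    induction ed using Sym2.ind with | _ x y => ?_
    have hxy : G.Adj x y := hed
    obtain ⟨j, rfl⟩ := qc_adj_iff.mp (hG hxy)
    simp only [edges, coe_biUnion, coe_image, Set.mem_iUnion, Set.mem_image, mem_coe]
    rcases hA x j hxy with h | h
    · exact ⟨j, mem_univ j, x, h, rfl⟩
    · exact ⟨j, mem_univ j, _, h, by rw [add_single_add_single]; exact Sym2.eq_swap⟩
  calc G.edgeSet.ncard ≤ #edges := by simpa using Set.ncard_le_ncard hsub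
    _ ≤ ∑ j, #((A j).image fun x => s(x, x + Pi.single j 1)) := card_biUnion_le
    _ ≤ ∑ j, #(A j) := sum_le_sum fun j _ => card_image_le

lemma card_filter_apply_eq_zero_mul_two (j : Fin n) :
    #{x : Fin n → ZMod 2 | x j = 0} * 2 = 2 ^ n := by
  simpa using (Pi.evalAddMonoidHom (fun _ : Fin n => ZMod 2) j).card_filter_eq_zero_mul_card
    fun c => ⟨Pi.single j c, by simp⟩

lemma two_mul_ncard_edgeSet_qc_le : 2 * (Qc n).edgeSet.ncard ≤ n * 2 ^ n := by
  have h := ncard_edgeSet_le_sum_card (le_refl (Qc n)) (fun j => {x | x j = 0}) fun x j _ => by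
    rcases zmod_two_eq_zero_or_one (x j) with h | h
    · simp [h]
    · simp [h, ZModModule.add_self]
  calc 2 * (Qc n).edgeSet.ncard ≤ ∑ j, #{x : Fin n → ZMod 2 | x j = 0} * 2 := by
        rw [← sum_mul, mul_comm]; exact Nat.mul_le_mul_right 2 h
    _ = n * 2 ^ n := by simp [card_filter_apply_eq_zero_mul_two]

end Counting

section HubCount

variable {m n : ℕ} {W : Type*} [AddCommGroup W] [Module (ZMod 2) W] [Fintype W] [DecidableEq W]
  (e : Fin m × W ↪ Fin n)

lemma card_filter_syndrome_eq_zero_mul_card (t : Fin m) :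
    #{y | syndrome e t y = 0} * Fintype.card W = 2 ^ n := by
  simpa [Nat.card_eq_fintype_card] using
    (syndrome e t).card_filter_eq_zero_mul_card (syndrome_surjective e t)

lemma card_filter_syndrome_eq_zero_and_apply_eq_zero {t : Fin m} {j : Fin n}
    (hj : ∀ w, e (t, w) ≠ j) :
    #{y | syndrome e t y = 0 ∧ y j = 0} * (2 * Fintype.card W) = 2 ^ n := by
  have hsurj : Surjective ((syndrome e t).prod (Pi.evalAddMonoidHom _ j)) := by
    rintro ⟨w, x⟩
    refine ⟨Pi.single (e (t, w)) 1 + Pi.single j x, ?_⟩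
    simp [syndrome_single_self, syndrome_single_of_notMem e hj, hj w]
  simpa [Nat.card_eq_fintype_card, mul_comm] using
    ((syndrome e t).prod (Pi.evalAddMonoidHom _ j)).card_filter_eq_zero_mul_card hsurj

def chargeSet (t : Fin m) (j : Fin n) : Finset (Fin n → ZMod 2) :=
  {y | syndrome e t y = 0 ∧ (y j = 0 ∨ ∃ w, e (t, w) = j)}

lemma card_chargeSet_mul (t : Fin m) (j : Fin n) :
    #(chargeSet e t j) * (2 * Fintype.card W) =
      (1 + if ∃ w, e (t, w) = j then 1 else 0) * 2 ^ n := by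
  split_ifs with hj
  · have hS : chargeSet e t j = ({y | syndrome e t y = 0} : Finset _) := by
      ext; simp [chargeSet, hj]
    rw [hS, mul_left_comm, card_filter_syndrome_eq_zero_mul_card]
  · push Not at hj
    have hS : chargeSet e t j = ({y | syndrome e t y = 0 ∧ y j = 0} : Finset _) := by
      ext; simp [chargeSet, hj]
    rw [hS, card_filter_syndrome_eq_zero_and_apply_eq_zero e hj, add_zero, one_mul]

lemma mem_chargeSet_or_add_single_mem {z : Fin n → ZMod 2} {t : Fin m} (hz : syndrome e t z = 0)
    (j : Fin n) : z ∈ chargeSet e t j ∨ z + Pi.single j 1 ∈ chargeSet e t j := by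
  by_cases hj : ∃ w, e (t, w) = j
  · exact Or.inl (by simp [chargeSet, hz, hj])
  · have hz' : syndrome e t (z + Pi.single j 1) = 0 := by
      rw [map_add, hz, syndrome_single_of_notMem e (not_exists.mp hj), add_zero]
    rcases zmod_two_eq_zero_or_one (z j) with h | h
    · exact Or.inl (by simp [chargeSet, hz, h])
    · exact Or.inr (by simp [chargeSet, hz', h, ZModModule.add_self])

theorem ncard_edgeSet_hubGraph_mul_le :
    (hubGraph (hubs e)).edgeSet.ncard * (2 * Fintype.card W) ≤
      m * (n + Fintype.card W) * 2 ^ n := by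
  have hcharge := ncard_edgeSet_le_sum_card (hubGraph_le (hubs e))
    (fun j => univ.biUnion fun t => chargeSet e t j) fun x j hadj => by
      simp only [mem_biUnion, mem_univ, true_and]
      rcases hadj.2 with ⟨t, ht⟩ | ⟨t, ht⟩
      · rcases mem_chargeSet_or_add_single_mem e ht j with h | h
        exacts [Or.inl ⟨t, h⟩, Or.inr ⟨t, h⟩]
      · rcases mem_chargeSet_or_add_single_mem e ht j with h | h
        · exact Or.inr ⟨t, h⟩
        · exact Or.inl ⟨t, by rwa [add_single_add_single] at h⟩
  calc (hubGraph (hubs e)).edgeSet.ncard * (2 * Fintype.card W)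
      ≤ ∑ j, ∑ t, #(chargeSet e t j) * (2 * Fintype.card W) := by
        simp only [← sum_mul]
        gcongr
        exact hcharge.trans (sum_le_sum fun j _ => card_biUnion_le)
    _ = ∑ t, (n + #{j | ∃ w, e (t, w) = j}) * 2 ^ n := by
        rw [sum_comm]
        simp only [card_chargeSet_mul, ← sum_mul, sum_add_distrib, sum_boole]
        simp
    _ ≤ ∑ _t : Fin m, (n + Fintype.card W) * 2 ^ n := by
        gcongr with t
        exact card_filter_exists_apply_eq_le _
    _ = m * (n + Fintype.card W) * 2 ^ n := by simp [mul_assoc]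

end HubCount

lemma exists_mul_two_pow_le_lt {m n : ℕ} (hm : 0 < m) (hmn : m ≤ n) :
    ∃ ℓ, m * 2 ^ ℓ ≤ n ∧ n < 2 * m * 2 ^ ℓ := by
  have hq : n / m ≠ 0 := (Nat.div_pos hmn hm).ne'
  refine ⟨Nat.log 2 (n / m), ?_, ?_⟩
  · calc m * 2 ^ Nat.log 2 (n / m) ≤ m * (n / m) :=
          Nat.mul_le_mul_left _ (Nat.pow_log_le_self 2 hq)
      _ ≤ n := Nat.mul_div_le n m
  · calc n < m * (n / m + 1) := Nat.lt_mul_div_succ n hm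
      _ ≤ m * 2 ^ (Nat.log 2 (n / m) + 1) :=
          Nat.mul_le_mul_left _ (Nat.lt_pow_succ_log_self one_lt_two _)
      _ = 2 * m * 2 ^ Nat.log 2 (n / m) := by ring

/-- `s-sat(Q_n, Q_m) < (m² + m/2)·2^n` for all `n` and all `m ≥ 1`: there is a
`(Q_n,Q_m)`-semi-saturated subgraph of `Q_n` with fewer than `(m² + m/2)·2^n` edges. -/
theorem stmt_3 (n m : ℕ) (hm : 1 ≤ m) :
    ∃ G : SimpleGraph (Fin n → ZMod 2), SemiSaturated n m G ∧
      (G.edgeSet.ncard : ℝ) < ((m : ℝ) ^ 2 + (m : ℝ) / 2) * 2 ^ n := by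
  suffices h : ∃ G, SemiSaturated n m G ∧ 2 * G.edgeSet.ncard < (2 * m ^ 2 + m) * 2 ^ n by
    obtain ⟨G, hG, hcard⟩ := h
    refine ⟨G, hG, ?_⟩
    have : (2 * G.edgeSet.ncard : ℝ) < (2 * m ^ 2 + m) * 2 ^ n := by exact_mod_cast hcard
    linarith
  rcases lt_or_ge n m with hnm | hmn
  · refine ⟨Qc n, ⟨le_rfl, fun _ h h' => absurd h h'⟩, two_mul_ncard_edgeSet_qc_le.trans_lt ?_⟩
    gcongr
    nlinarith
  · obtain ⟨ℓ, hlow, hhigh⟩ := exists_mul_two_pow_le_lt hm hmn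
    obtain ⟨e⟩ := Function.Embedding.nonempty_of_card_le
      (by simpa using hlow : Fintype.card (Fin m × (Fin ℓ → ZMod 2)) ≤ Fintype.card (Fin n))
    have : NeZero m := ⟨by omega⟩
    refine ⟨_, semiSaturated_hubGraph e, ?_⟩
    have hE := ncard_edgeSet_hubGraph_mul_le e
    simp only [Fintype.card_pi, ZMod.card, prod_const, card_univ, Fintype.card_fin] at hE
    refine Nat.lt_of_mul_lt_mul_right (a := 2 ^ ℓ) ?_
    calc 2 * (hubGraph (hubs e)).edgeSet.ncard * 2 ^ ℓ
        ≤ m * (n + 2 ^ ℓ) * 2 ^ n := by linarith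
      _ < m * (2 * m * 2 ^ ℓ + 2 ^ ℓ) * 2 ^ n := by gcongr
      _ = (2 * m ^ 2 + m) * 2 ^ n * 2 ^ ℓ := by ring
end

section
/- If G_1 and G_2 are weakly (Q_{n−1}, Q_2)-saturated spanning trees of Q_{n−1}, then the graph formed by placing G_1 and G_2 in the two complementary copies of Q_{n−1} inside Q_n and adding a single edge between one pair of corresponding vertices is a weakly (Q_n, Q_2)-saturated spanning tree of Q_n. -/
/-- `G` is weakly `(Q_n, Q_m)`-saturated. -/
def WeaklySaturated (n m : ℕ) (G : SimpleGraph (Fin n → ZMod 2)) : Prop :=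
  G ≤ Qc n ∧ ∃ l : List (Sym2 (Fin n → ZMod 2)),
    l.Nodup ∧ (∀ e ∈ l, e ∈ (Qc n).edgeSet \ G.edgeSet) ∧
    (Qc n).edgeSet ⊆ G.edgeSet ∪ {e | e ∈ l} ∧
    ∀ i : Fin l.length,
      NewCube m (G ⊔ SimpleGraph.fromEdgeSet {e | e ∈ l.take i.1}) (l.get i)

/-- The graph on `Q_{n+1}` obtained by placing `G₁` in the bottom copy of `Q_n` (last
coordinate `0`), `G₂` in the top copy (last coordinate `1`), and adding the single
matching edge at the vertex `v₀`. -/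
def glue (n : ℕ) (G₁ G₂ : SimpleGraph (Fin n → ZMod 2)) (v₀ : Fin n → ZMod 2) :
    SimpleGraph (Fin (n + 1) → ZMod 2) :=
  SimpleGraph.fromRel (fun x y =>
    (x (Fin.last n) = y (Fin.last n) ∧
      ((x (Fin.last n) = 0 ∧ G₁.Adj (x ∘ Fin.castSucc) (y ∘ Fin.castSucc)) ∨
       (x (Fin.last n) = 1 ∧ G₂.Adj (x ∘ Fin.castSucc) (y ∘ Fin.castSucc)))) ∨
    (x ∘ Fin.castSucc = v₀ ∧ y ∘ Fin.castSucc = v₀ ∧ x (Fin.last n) ≠ y (Fin.last n)))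

/-!
Weak saturation of `G` is reachability of `Q_n` from `G` under the step "add one edge that
creates a new `Q_m`". Both `glue n G₁ G₂ v₀` and `Q_{n+1}` are *layered* graphs: a graph on
each of the two copies of `Q_n` plus the edges of direction `n + 1` over a set of vertices.
Each copy is an induced subgraph, so a saturation process of `G₁` (resp. `G₂`) runs unchanged
in the bottom (resp. top) copy. Once both copies are complete, the missing edges
`s(u0, u1)` are added one at a time, always at a vertex `u` adjacent in `Q_n` to a vertex `w`
whose edge `s(w0, w1)` is already present: `u0 u1 w1 w0` is then a new 4-cycle.
Finally, `glue n G₁ G₂ v₀` is `G₁ ⊕ G₂` plus one edge, a tree by counting edges.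
-/

open Function Relation SimpleGraph

section CubeCopies

variable {V W : Type*} {m : ℕ}

lemma Qc_adj_iff {n : ℕ} {x y : Fin n → ZMod 2} : (Qc n).Adj x y ↔ hammingDist x y = 1 := by
  simp only [Qc, fromRel_adj, hammingDist_comm y x, or_self, and_iff_right_iff_imp]
  rintro h rfl
  simp at h

lemma isCubeCopy_comp_iff {f : V → W} (hf : Injective f) {K : SimpleGraph W}
    {g : (Fin m → ZMod 2) → V} : IsCubeCopy m K (f ∘ g) ↔ IsCubeCopy m (K.comap f) g := by
  simp only [IsCubeCopy, hf.of_comp_iff, comap_adj, comp_apply]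

lemma comap_sup_fromEdgeSet_map {f : V → W} (hf : Injective f) (K : SimpleGraph W)
    (e : Sym2 V) : (K ⊔ fromEdgeSet {e.map f}).comap f = K.comap f ⊔ fromEdgeSet {e} := by
  ext a b
  simp only [comap_adj, sup_adj, fromEdgeSet_adj, Set.mem_singleton_iff, ← Sym2.map_mk,
    (Sym2.map.injective hf).eq_iff, hf.ne_iff]

lemma NewCube.map {f : V → W} (hf : Injective f) {K : SimpleGraph W} {e : Sym2 V}
    (h : NewCube m (K.comap f) e) : NewCube m K (e.map f) := by
  obtain ⟨g, hg, hng⟩ := h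
  refine ⟨f ∘ g, ?_, ?_⟩ <;> rw [isCubeCopy_comp_iff hf]
  · rwa [comap_sup_fromEdgeSet_map hf]
  · exact hng

lemma NewCube.fromEdgeSet_not_le {G : SimpleGraph V} {e : Sym2 V} (h : NewCube m G e) :
    ¬fromEdgeSet {e} ≤ G := by
  obtain ⟨f, hf, hnf⟩ := h
  exact fun hle => hnf (sup_eq_left.2 hle ▸ hf)

lemma NewCube.not_mem_edgeSet {G : SimpleGraph V} {e : Sym2 V} (h : NewCube m G e) :
    e ∉ G.edgeSet :=
  fun he => h.fromEdgeSet_not_le <| (fromEdgeSet_le G).2 <| by simpa using Or.inr he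

lemma NewCube.mem_edgeSet_sup {G : SimpleGraph V} {e : Sym2 V} (h : NewCube m G e) :
    e ∈ (G ⊔ fromEdgeSet {e}).edgeSet := by
  have hd : ¬e.IsDiag := fun hd => h.fromEdgeSet_not_le <| (fromEdgeSet_le G).2 <| by simp [hd]
  simp [hd]

def square (a b c d : V) : (Fin 2 → ZMod 2) → V := fun x =>
  if x 0 = 0 then (if x 1 = 0 then a else b) else (if x 1 = 0 then d else c)

lemma fin_two_zmod_two_cases (x : Fin 2 → ZMod 2) :
    x = ![0, 0] ∨ x = ![0, 1] ∨ x = ![1, 1] ∨ x = ![1, 0] := by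
  revert x
  decide

lemma isCubeCopy_square {G : SimpleGraph V} {a b c d : V} (hac : a ≠ c) (hbd : b ≠ d)
    (hab : G.Adj a b) (hbc : G.Adj b c) (hcd : G.Adj c d) (hda : G.Adj d a) :
    IsCubeCopy 2 G (square a b c d) := by
  have := hab.ne; have := hbc.ne; have := hcd.ne; have := hda.ne
  refine ⟨fun x y hxy => ?_, fun x y hxy => ?_⟩ <;>
  rcases fin_two_zmod_two_cases x with rfl | rfl | rfl | rfl <;>
  rcases fin_two_zmod_two_cases y with rfl | rfl | rfl | rfl
  all_goals first
    | rfl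
    | exact absurd hxy (by rw [Qc_adj_iff]; decide)
    | simp_all [square, G.adj_comm, eq_comm]

lemma newCube_two_of_square {G : SimpleGraph V} {a b c d : V} (hab : a ≠ b) (hac : a ≠ c)
    (hbd : b ≠ d) (hnab : ¬G.Adj a b) (hbc : G.Adj b c) (hcd : G.Adj c d) (hda : G.Adj d a) :
    NewCube 2 G s(a, b) := by
  refine ⟨square a b c d, isCubeCopy_square hac hbd (by simp [hab]) (Or.inl hbc) (Or.inl hcd)
    (Or.inl hda), fun h => hnab ?_⟩
  simpa [square] using h.2 ![0, 0] ![0, 1] (by rw [Qc_adj_iff]; decide)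

end CubeCopies

section Saturation

variable {V : Type*} {m : ℕ}

def CubeStep (m : ℕ) (G G' : SimpleGraph V) : Prop :=
  ∃ e, NewCube m G e ∧ G ⊔ fromEdgeSet {e} = G'

lemma CubeStep.le {G G' : SimpleGraph V} (h : CubeStep m G G') : G ≤ G' := by
  obtain ⟨e, -, rfl⟩ := h
  exact le_sup_left

lemma le_of_reflTransGen_cubeStep {G G' : SimpleGraph V} (h : ReflTransGen (CubeStep m) G G') :
    G ≤ G' := by
  induction h with
  | refl => exact le_rfl
  | tail _ hstep ih => exact ih.trans hstep.le

def IsCubeSeq (m : ℕ) (G : SimpleGraph V) (l : List (Sym2 V)) : Prop :=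
  ∀ i : Fin l.length, NewCube m (G ⊔ fromEdgeSet {e | e ∈ l.take i.1}) (l.get i)

lemma sup_fromEdgeSet_cons (G : SimpleGraph V) (e : Sym2 V) (l : List (Sym2 V)) :
    G ⊔ fromEdgeSet {x | x ∈ e :: l} = G ⊔ fromEdgeSet {e} ⊔ fromEdgeSet {x | x ∈ l} := by
  rw [sup_assoc, ← fromEdgeSet_union]
  congr 2
  ext
  simp

lemma isCubeSeq_cons {G : SimpleGraph V} {e : Sym2 V} {l : List (Sym2 V)} :
    IsCubeSeq m G (e :: l) ↔ NewCube m G e ∧ IsCubeSeq m (G ⊔ fromEdgeSet {e}) l := by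
  constructor
  · intro h
    refine ⟨by simpa using h ⟨0, by simp⟩, fun i => ?_⟩
    have := h i.succ
    rwa [Fin.val_succ, List.take_succ_cons, sup_fromEdgeSet_cons] at this
  · rintro ⟨he, hl⟩ i
    refine Fin.cases ?_ (fun i => ?_) i
    · simpa using he
    · show NewCube m (G ⊔ fromEdgeSet {x | x ∈ (e :: l).take (i + 1)}) (l.get i)
      rw [List.take_succ_cons, sup_fromEdgeSet_cons]
      exact hl i

lemma reflTransGen_of_isCubeSeq {G : SimpleGraph V} {l : List (Sym2 V)} (h : IsCubeSeq m G l) :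
    ReflTransGen (CubeStep m) G (G ⊔ fromEdgeSet {e | e ∈ l}) := by
  induction l generalizing G with
  | nil => simpa using .refl
  | cons e l ih =>
    obtain ⟨he, hl⟩ := isCubeSeq_cons.1 h
    rw [sup_fromEdgeSet_cons]
    exact .head ⟨e, he, rfl⟩ (ih hl)

lemma exists_isCubeSeq_of_reflTransGen {G G' : SimpleGraph V}
    (h : ReflTransGen (CubeStep m) G G') :
    ∃ l : List (Sym2 V), l.Nodup ∧ (∀ e ∈ l, e ∈ G'.edgeSet \ G.edgeSet) ∧
      G ⊔ fromEdgeSet {e | e ∈ l} = G' ∧ IsCubeSeq m G l := by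
  induction h using ReflTransGen.head_induction_on with
  | refl => exact ⟨[], List.nodup_nil, by simp, by simp, fun i => i.elim0⟩
  | head hstep _ ih =>
    obtain ⟨e, he, rfl⟩ := hstep
    obtain ⟨l, hnd, hmem, rfl, hseq⟩ := ih
    refine ⟨e :: l, List.nodup_cons.2 ⟨fun hel => (hmem e hel).2 he.mem_edgeSet_sup, hnd⟩, ?_,
      by rw [sup_fromEdgeSet_cons], isCubeSeq_cons.2 ⟨he, hseq⟩⟩
    rintro x (_ | ⟨_, hx⟩)
    · exact ⟨edgeSet_mono le_sup_left he.mem_edgeSet_sup, he.not_mem_edgeSet⟩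
    · exact ⟨(hmem x hx).1, fun hxG => (hmem x hx).2 (edgeSet_mono le_sup_left hxG)⟩

theorem weaklySaturated_iff {n : ℕ} {G : SimpleGraph (Fin n → ZMod 2)} :
    WeaklySaturated n m G ↔ ReflTransGen (CubeStep m) G (Qc n) := by
  constructor
  · rintro ⟨hG, l, -, hl, hcov, hseq⟩
    convert reflTransGen_of_isCubeSeq hseq
    refine le_antisymm (fun a b hab => ?_)
      (sup_le hG ((fromEdgeSet_le _).2 fun e he => (hl e he.1).1))
    exact (hcov (show s(a, b) ∈ (Qc n).edgeSet from hab)).imp id fun h => ⟨h, hab.ne⟩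
  · intro h
    obtain ⟨l, hnd, hl, heq, hseq⟩ := exists_isCubeSeq_of_reflTransGen h
    refine ⟨le_of_reflTransGen_cubeStep h, l, hnd, hl, ?_, hseq⟩
    rw [← heq, edgeSet_sup, edgeSet_fromEdgeSet]
    exact Set.union_subset_union_right _ Set.sdiff_subset

end Saturation

lemma SimpleGraph.IsTree.sum_sup_edge {V W : Type*} [Finite V] [Finite W] {G : SimpleGraph V}
    {H : SimpleGraph W} (hG : G.IsTree) (hH : H.IsTree) (v : V) (w : W) :
    ((G ⊕g H) ⊔ edge (Sum.inl v) (Sum.inr w)).IsTree := by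
  rw [isTree_iff_connected_and_card] at hG hH ⊢
  refine ⟨hG.1.sum_sup_edge hH.1, ?_⟩
  have hnew : s(Sum.inl v, Sum.inr w) ∉ (G ⊕g H).edgeSet :=
    not_adj_sum_inl_inr (G := G) (H := H) v w
  rw [edgeSet_sup, edgeSet_edge_of_ne Sum.inl_ne_inr, Set.union_singleton,
    Nat.card_coe_set_eq, Set.ncard_insert_of_notMem hnew, ← Nat.card_coe_set_eq,
    Nat.card_congr edgeSetSumEquiv, Nat.card_sum, Nat.card_sum, ← hG.2, ← hH.2]
  ring

lemma zmod_two_cases (c : ZMod 2) : c = 0 ∨ c = 1 := by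
  revert c
  decide

section Layered

variable {n : ℕ}

open Fin in
def layered (H : ZMod 2 → SimpleGraph (Fin n → ZMod 2)) (M : Set (Fin n → ZMod 2)) :
    SimpleGraph (Fin (n + 1) → ZMod 2) where
  Adj x y := (x (last n) = y (last n) ∧ (H (x (last n))).Adj (init x) (init y)) ∨
    (x (last n) ≠ y (last n) ∧ init x = init y ∧ init x ∈ M)
  symm := ⟨fun x y => by
    rintro (⟨h, hadj⟩ | ⟨h, heq, hM⟩)
    · exact Or.inl ⟨h.symm, h ▸ hadj.symm⟩
    · exact Or.inr ⟨Ne.symm h, heq.symm, heq ▸ hM⟩⟩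
  loopless := ⟨fun x => by rintro (⟨-, h⟩ | ⟨h, -⟩); exacts [h.ne rfl, h rfl]⟩

variable {H : ZMod 2 → SimpleGraph (Fin n → ZMod 2)} {M : Set (Fin n → ZMod 2)}

@[simp]
lemma layered_adj_snoc {a b : Fin n → ZMod 2} {c d : ZMod 2} :
    (layered H M).Adj (Fin.snoc a c) (Fin.snoc b d) ↔
      (c = d ∧ (H c).Adj a b) ∨ (c ≠ d ∧ a = b ∧ a ∈ M) := by
  simp [layered]

lemma ext_snoc {K K' : SimpleGraph (Fin (n + 1) → ZMod 2)}
    (h : ∀ (a b : Fin n → ZMod 2) (c d : ZMod 2),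
      K.Adj (Fin.snoc a c) (Fin.snoc b d) ↔ K'.Adj (Fin.snoc a c) (Fin.snoc b d)) : K = K' := by
  ext x y
  rw [← Fin.snoc_init_self x, ← Fin.snoc_init_self y]
  exact h ..

lemma comap_snoc_layered (c : ZMod 2) :
    (layered H M).comap (Fin.snoc · c : (Fin n → ZMod 2) → Fin (n + 1) → ZMod 2) = H c := by
  ext a b
  simp

lemma layered_sup_fromEdgeSet_map_snoc (c : ZMod 2) (e : Sym2 (Fin n → ZMod 2)) :
    layered H M ⊔ fromEdgeSet {e.map (Fin.snoc · c)} =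
      layered (update H c (H c ⊔ fromEdgeSet {e})) M := by
  induction e with | h u v => ?_
  refine ext_snoc fun a b c' d' => ?_
  by_cases hc : c' = c
  · subst hc
    simp only [sup_adj, layered_adj_snoc, fromEdgeSet_adj, Set.mem_singleton_iff, Sym2.map_mk,
      Sym2.eq_iff, Fin.snoc_inj, update_self, ne_eq]
    aesop
  · simp [hc]

lemma layered_sup_rung (u : Fin n → ZMod 2) :
    layered H M ⊔ fromEdgeSet {s(Fin.snoc u 0, Fin.snoc u 1)} = layered H (insert u M) := by
  refine ext_snoc fun a b c d => ?_
  rcases zmod_two_cases c with rfl | rfl <;> rcases zmod_two_cases d with rfl | rfl <;>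
  simp only [sup_adj, layered_adj_snoc, fromEdgeSet_adj, Set.mem_singleton_iff, Sym2.eq_iff,
    Fin.snoc_inj, Set.mem_insert_iff, ne_eq] <;>
  aesop

lemma hammingDist_snoc (a b : Fin n → ZMod 2) (c d : ZMod 2) :
    hammingDist (Fin.snoc a c : Fin (n + 1) → ZMod 2) (Fin.snoc b d) =
      hammingDist a b + if c = d then 0 else 1 := by
  simp only [hammingDist, Finset.card_filter]
  rw [Fin.sum_univ_castSucc]
  simp [ite_not]

lemma Qc_succ : Qc (n + 1) = layered (fun _ => Qc n) Set.univ := by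
  refine ext_snoc fun a b c d => ?_
  by_cases hcd : c = d <;> simp [Qc_adj_iff, hammingDist_snoc, hcd]

lemma glue_eq_layered (G₁ G₂ : SimpleGraph (Fin n → ZMod 2)) (v₀ : Fin n → ZMod 2) :
    glue n G₁ G₂ v₀ = layered (fun c => if c = 0 then G₁ else G₂) {v₀} := by
  refine ext_snoc fun a b c d => ?_
  rcases zmod_two_cases c with rfl | rfl <;> rcases zmod_two_cases d with rfl | rfl <;>
  simp only [glue, fromRel_adj, ne_eq, Fin.snoc_inj, Fin.snoc_last, Fin.snoc_comp_castSucc,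
    layered_adj_snoc, Set.mem_singleton_iff] <;>
  grind [Adj.ne, adj_comm]

noncomputable def layerEquiv :
    (Fin n → ZMod 2) ⊕ (Fin n → ZMod 2) ≃ (Fin (n + 1) → ZMod 2) :=
  Equiv.ofBijective (Sum.elim (Fin.snoc · 0) (Fin.snoc · 1)) <| by
    refine ⟨?_, fun x => ?_⟩
    · rintro (a | a) (b | b) h <;> simp_all
    · rw [← Fin.snoc_init_self x]
      rcases zmod_two_cases (x (Fin.last n)) with h | h <;> rw [h]
      exacts [⟨.inl _, rfl⟩, ⟨.inr _, rfl⟩]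

noncomputable def layeredIso (H : ZMod 2 → SimpleGraph (Fin n → ZMod 2))
    (v : Fin n → ZMod 2) :
    (H 0 ⊕g H 1) ⊔ edge (Sum.inl v) (Sum.inr v) ≃g layered H {v} where
  toEquiv := layerEquiv
  map_rel_iff' := by
    rintro (a | a) (b | b) <;> dsimp [layerEquiv, Equiv.ofBijective] <;>
    simp only [layered_adj_snoc, sup_adj, sum_adj, edge_adj, Set.mem_singleton_iff,
      Sum.inl.injEq, Sum.inr.injEq, reduceCtorEq] <;>
    grind

end Layered

section Saturating

variable {n m : ℕ} {H : ZMod 2 → SimpleGraph (Fin n → ZMod 2)} {M : Set (Fin n → ZMod 2)}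

lemma reflTransGen_layered_update (c : ZMod 2) {K : SimpleGraph (Fin n → ZMod 2)}
    (h : ReflTransGen (CubeStep m) (H c) K) :
    ReflTransGen (CubeStep m) (layered H M) (layered (update H c K) M) := by
  induction h with
  | refl => simp only [update_eq_self]; exact .refl
  | tail _ hstep ih =>
    obtain ⟨e, he, rfl⟩ := hstep
    refine ih.tail
      ⟨e.map (Fin.snoc · c : (Fin n → ZMod 2) → Fin (n + 1) → ZMod 2), ?_, ?_⟩
    · refine NewCube.map (Fin.snoc_left_injective (α := fun _ => ZMod 2) c) ?_
      rwa [comap_snoc_layered, update_self]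
    · rw [layered_sup_fromEdgeSet_map_snoc, update_self, update_idem]

lemma newCube_rung {u w : Fin n → ZMod 2} (hu : u ∉ M) (hw : w ∈ M) (h₀ : (H 0).Adj u w)
    (h₁ : (H 1).Adj u w) : NewCube 2 (layered H M) s(Fin.snoc u 0, Fin.snoc u 1) :=
  newCube_two_of_square (c := Fin.snoc w 1) (d := Fin.snoc w 0) (by simp) (by simp) (by simp)
    (by simp [hu]) (by simp [h₁]) (by simp [hw]) (by simp [h₀.symm])

lemma reflTransGen_layered_univ {Q : SimpleGraph (Fin n → ZMod 2)} (hQ : Q.Connected)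
    (hM : M.Nonempty) :
    ReflTransGen (CubeStep 2) (layered (fun _ => Q) M) (layered (fun _ => Q) Set.univ) := by
  obtain ⟨k, hk⟩ : ∃ k, Mᶜ.ncard = k := ⟨_, rfl⟩
  induction k generalizing M with
  | zero =>
    rw [Set.ncard_eq_zero, Set.compl_empty_iff] at hk
    rw [hk]
  | succ k ih =>
    obtain ⟨v, hv⟩ := hM
    obtain ⟨u, hu⟩ := Set.nonempty_of_ncard_ne_zero (s := Mᶜ) (by omega)
    obtain ⟨d, -, hd, hd'⟩ := (hQ.preconnected v u).some.exists_boundary_dart M hv hu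
    refine .head ⟨_, newCube_rung hd' hd d.adj.symm d.adj.symm, layered_sup_rung _⟩
      (ih ⟨v, .inr hv⟩ ?_)
    rw [show (insert d.snd M)ᶜ = Mᶜ \ {d.snd} by ext; simp [and_comm],
      Set.ncard_sdiff_singleton_of_mem hd', hk, Nat.add_sub_cancel]

end Saturating

/-- If `G₁` and `G₂` are weakly `(Q_n, Q_2)`-saturated spanning trees of `Q_n`, then placing
them in the two complementary copies of `Q_n` inside `Q_{n+1}` and adding one edge between a
pair of corresponding vertices yields a weakly `(Q_{n+1}, Q_2)`-saturated spanning tree. -/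
theorem stmt_9 (n : ℕ) (G₁ G₂ : SimpleGraph (Fin n → ZMod 2)) (v₀ : Fin n → ZMod 2)
    (h₁ : WeaklySaturated n 2 G₁) (ht₁ : G₁.IsTree)
    (h₂ : WeaklySaturated n 2 G₂) (ht₂ : G₂.IsTree) :
    WeaklySaturated (n + 1) 2 (glue n G₁ G₂ v₀) ∧ (glue n G₁ G₂ v₀).IsTree := by
  rw [weaklySaturated_iff] at h₁ h₂ ⊢
  set H : ZMod 2 → SimpleGraph (Fin n → ZMod 2) := fun c => if c = 0 then G₁ else G₂
  rw [glue_eq_layered]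
  refine ⟨?_, (layeredIso H v₀).isTree_iff.1
    (by simpa [H] using ht₁.sum_sup_edge ht₂ v₀ v₀)⟩
  have hQ : (Qc n).Connected := ht₁.connected.mono (le_of_reflTransGen_cubeStep h₁)
  have hbottom := reflTransGen_layered_update (H := H) (M := {v₀}) 0 (by simpa [H] using h₁)
  have htop := reflTransGen_layered_update (H := update H 0 (Qc n)) (M := {v₀}) 1
    (by simpa [H] using h₂)
  have hfull : update (update H 0 (Qc n)) 1 (Qc n) = fun _ => Qc n := by
    funext c
    rcases zmod_two_cases c with rfl | rfl <;> simp
  rw [hfull] at htop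
  rw [Qc_succ]
  exact hbottom.trans <| htop.trans <| reflTransGen_layered_univ hQ (Set.singleton_nonempty v₀)
end

section
/- Let n = m(2^t − 1) + r with 0 ≤ r < m·2^t and n_0 = 2^t − 1, and let C ⊆ {0,1}^{n_0} be a Hamming code. Write each vertex of Q_n as (v_1|...|v_m|v_{m+1}) where v_i ∈ {0,1}^{n_0} for i ≤ m and v_{m+1} ∈ {0,1}^r. Let A = {v : v_i ∈ C for some 1 ≤ i ≤ m}, and let G be the subgraph of Q_n consisting of all edges with at least one endpoint in A. Then G is (Q_n, Q_m)-semi-saturated: adding any edge of Q_n not in G creates a new copy of Q_m. -/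
/-- The `i`-th block (of length `n₀`) of a vertex of `Q_{m·n₀+r}`. -/
def block (m n₀ r : ℕ) (v : Fin (m * n₀ + r) → ZMod 2) (i : Fin m) :
    Fin n₀ → ZMod 2 :=
  fun j => v ⟨i.1 * n₀ + j.1, by
    have hi : i.1 + 1 ≤ m := i.2
    have hj : j.1 < n₀ := j.2
    calc i.1 * n₀ + j.1 < (i.1 + 1) * n₀ := by nlinarith
      _ ≤ m * n₀ := Nat.mul_le_mul_right _ hi
      _ ≤ m * n₀ + r := Nat.le_add_right _ _⟩

/-! ### Auxiliary lemmas -/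

lemma zmod2_ne_iff : ∀ a b : ZMod 2, a ≠ b ↔ b = a + 1 := by decide

lemma hamming_one_iff {k : ℕ} (x y : Fin k → ZMod 2) :
    hammingDist x y = 1 ↔ ∃ d, y = x + Pi.single d 1 := by
  constructor
  · intro h
    rw [hammingDist, Finset.card_eq_one] at h
    obtain ⟨d, hd⟩ := h
    refine ⟨d, funext fun j => ?_⟩
    by_cases hj : j = d
    · subst hj
      have : x j ≠ y j := by
        have := Finset.mem_filter.mp (hd ▸ Finset.mem_singleton_self j) |>.2
        exact this
      have := (zmod2_ne_iff _ _).mp this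
      simp [this, Pi.single_apply]
    · have : ¬ (x j ≠ y j) := by
        intro hne
        have : j ∈ ({d} : Finset (Fin k)) := hd ▸ Finset.mem_filter.mpr ⟨Finset.mem_univ _, hne⟩
        exact hj (Finset.mem_singleton.mp this)
      push_neg at this
      simp [← this, Pi.single_apply, hj]
  · rintro ⟨d, rfl⟩
    rw [hammingDist]
    convert Finset.card_singleton d
    ext j
    simp only [Finset.mem_filter, Finset.mem_univ, true_and, Finset.mem_singleton,
      Pi.add_apply, Pi.single_apply]
    by_cases hj : j = d <;> simp [hj]

lemma Qc_adj {k : ℕ} {x y : Fin k → ZMod 2} : (Qc k).Adj x y ↔ hammingDist x y = 1 := by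
  constructor
  · rintro ⟨hne, h | h⟩
    · exact h
    · rw [hammingDist_comm]; exact h
  · intro h
    exact ⟨fun he => by simp [he, hammingDist_self] at h, Or.inl h⟩

def emb (m n₀ r : ℕ) (i : Fin m) (j : Fin n₀) : Fin (m * n₀ + r) :=
  ⟨i.1 * n₀ + j.1, by
    have hi : i.1 + 1 ≤ m := i.2
    have hj : j.1 < n₀ := j.2
    calc i.1 * n₀ + j.1 < (i.1 + 1) * n₀ := by nlinarith
      _ ≤ m * n₀ := Nat.mul_le_mul_right _ hi
      _ ≤ m * n₀ + r := Nat.le_add_right _ _⟩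

lemma block_apply (m n₀ r : ℕ) (v : Fin (m * n₀ + r) → ZMod 2) (i : Fin m) (j : Fin n₀) :
    block m n₀ r v i j = v (emb m n₀ r i j) := rfl

lemma emb_inj {m n₀ r : ℕ} {i i' : Fin m} {j j' : Fin n₀}
    (h : emb m n₀ r i j = emb m n₀ r i' j') : i = i' ∧ j = j' := by
  have h' : i.1 * n₀ + j.1 = i'.1 * n₀ + j'.1 := congrArg Fin.val h
  have hj : j.1 < n₀ := j.2
  have hj' : j'.1 < n₀ := j'.2
  have hii : i.1 = i'.1 := by
    rcases lt_trichotomy i.1 i'.1 with hc | hc | hc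
    · nlinarith
    · exact hc
    · nlinarith
  rw [hii] at h'
  exact ⟨Fin.ext hii, Fin.ext (by omega)⟩

/-- pointwise value of the sum of indicator vectors -/
def sumv {n m : ℕ} (dir : Fin m → Fin n) (ε : Fin m → ZMod 2) (j : Fin n) : ZMod 2 :=
  ∑ i, ε i * (if dir i = j then 1 else 0)

lemma sumv_eval {n m : ℕ} (dir : Fin m → Fin n) (hdir : Function.Injective dir)
    (ε : Fin m → ZMod 2) (i : Fin m) : sumv dir ε (dir i) = ε i := by
  rw [sumv, Finset.sum_eq_single i]
  · simp
  · intro i' _ hne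
    have : dir i' ≠ dir i := fun h => hne (hdir h)
    simp [this]
  · simp

lemma sumv_eval_ne {n m : ℕ} (dir : Fin m → Fin n) (ε : Fin m → ZMod 2) (j : Fin n)
    (hj : ∀ i, dir i ≠ j) : sumv dir ε j = 0 := by
  rw [sumv]
  apply Finset.sum_eq_zero
  intro i _
  simp [hj i]

lemma sumv_add_single {n m : ℕ} (dir : Fin m → Fin n) (ε : Fin m → ZMod 2) (i₁ : Fin m)
    (j : Fin n) :
    sumv dir (ε + Pi.single i₁ 1) j = sumv dir ε j + (if dir i₁ = j then 1 else 0) := by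
  rw [sumv, sumv]
  have : ∀ i, ((ε + Pi.single i₁ 1 : Fin m → ZMod 2) i) * (if dir i = j then (1:ZMod 2) else 0)
      = ε i * (if dir i = j then 1 else 0)
        + ((Pi.single i₁ 1 : Fin m → ZMod 2) i) * (if dir i = j then 1 else 0) := by
    intro i; rw [Pi.add_apply, add_mul]
  rw [Finset.sum_congr rfl fun i _ => this i, Finset.sum_add_distrib]
  congr 1
  rw [Finset.sum_eq_single i₁]
  · simp
  · intro i' _ hne; simp [Pi.single_apply, hne]
  · simp

lemma sumv_zero {n m : ℕ} (dir : Fin m → Fin n) (j : Fin n) : sumv dir 0 j = 0 := by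
  rw [sumv]; apply Finset.sum_eq_zero; intro i _; simp

/-- the cube map -/
def cubeF {n m : ℕ} (x : Fin n → ZMod 2) (dir : Fin m → Fin n)
    (ε : Fin m → ZMod 2) : Fin n → ZMod 2 :=
  fun j => x j + sumv dir ε j

/-- Write `n = m·(2^t − 1) + r` with `0 ≤ r < m·2^t`, and let `C` be a Hamming code in
`{0,1}^{2^t−1}` (a linear code of minimum distance 3 which is dominating in `Q_{2^t−1}`).
Let `A` be the set of vertices of `Q_n` having some block `i ≤ m` in `C`, and `G` the
subgraph of `Q_n` of all edges with at least one endpoint in `A`. Then `G` is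
`(Q_n, Q_m)`-semi-saturated. -/
theorem stmt_15 (m t r : ℕ) (hr : r < m * 2 ^ t)
    (C : Set (Fin (2 ^ t - 1) → ZMod 2))
    (hlin : ∃ S : Submodule (ZMod 2) (Fin (2 ^ t - 1) → ZMod 2),
      C = (S : Set (Fin (2 ^ t - 1) → ZMod 2)))
    (hdist : ∀ x ∈ C, ∀ y ∈ C, x ≠ y → 3 ≤ hammingDist x y)
    (hdom : ∀ x : Fin (2 ^ t - 1) → ZMod 2,
      x ∈ C ∨ ∃ c ∈ C, (Qc (2 ^ t - 1)).Adj x c) :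
    SemiSaturated (m * (2 ^ t - 1) + r) m
      (SimpleGraph.fromRel (fun x y =>
        (Qc (m * (2 ^ t - 1) + r)).Adj x y ∧
        ((∃ i : Fin m, block m (2 ^ t - 1) r x i ∈ C) ∨
         (∃ i : Fin m, block m (2 ^ t - 1) r y i ∈ C)))) := by
  constructor
  · intro x y h
    rw [SimpleGraph.fromRel_adj] at h
    obtain ⟨hne, ⟨hadj, -⟩ | ⟨hadj, -⟩⟩ := h
    · exact hadj
    · exact hadj.symm
  · intro e
    induction e using Sym2.ind with
    | _ x y =>
    intro he hge
    rw [SimpleGraph.mem_edgeSet] at he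
    rw [SimpleGraph.mem_edgeSet, SimpleGraph.fromRel_adj] at hge
    have hm : 0 < m := Nat.pos_of_ne_zero (by rintro rfl; simp at hr)
    have hxy : hammingDist x y = 1 := Qc_adj.mp he
    have hnexy : x ≠ y := he.ne
    obtain ⟨d, hyd⟩ := (hamming_one_iff x y).mp hxy
    have hx : ∀ i : Fin m, block m (2 ^ t - 1) r x i ∉ C := by
      intro i hi
      exact hge ⟨hnexy, Or.inl ⟨he, Or.inl ⟨i, hi⟩⟩⟩
    have hy : ∀ i : Fin m, block m (2 ^ t - 1) r y i ∉ C := by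
      intro i hi
      exact hge ⟨hnexy, Or.inl ⟨he, Or.inr ⟨i, hi⟩⟩⟩
    -- choose the correcting direction in each block
    have hex : ∀ i : Fin m, ∃ δi : Fin (2 ^ t - 1), (block m (2 ^ t - 1) r x i + Pi.single δi 1) ∈ C := by
      intro i
      rcases hdom (block m (2 ^ t - 1) r x i) with h | ⟨c, hc, hadj⟩
      · exact absurd h (hx i)
      · obtain ⟨δi, hδi⟩ := (hamming_one_iff _ _).mp (Qc_adj.mp hadj)
        exact ⟨δi, hδi ▸ hc⟩
    choose δ hδ using hex
    -- the special block index
    obtain ⟨i₀, hK1⟩ : ∃ i₀ : Fin m, ∀ i : Fin m, i ≠ i₀ → ∀ j : Fin (2 ^ t - 1),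
        emb m (2 ^ t - 1) r i j ≠ d := by
      by_cases hd : d.1 < m * (2 ^ t - 1)
      · have hn0 : 0 < (2 ^ t - 1) := by
          rcases Nat.eq_zero_or_pos (2 ^ t - 1) with h | h
          · exfalso
            obtain ⟨k, h3⟩ : ∃ k : ℕ, k < m * (2 ^ t - 1) := ⟨d.1, hd⟩
            rw [h, Nat.mul_zero] at h3
            exact Nat.not_lt_zero _ h3
          · exact h
        refine ⟨⟨d.1 / (2 ^ t - 1), ?_⟩, ?_⟩
        · exact (Nat.div_lt_iff_lt_mul hn0).mpr hd
        · intro i hi j hj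
          apply hi
          have hde : emb m (2 ^ t - 1) r ⟨d.1 / (2 ^ t - 1), (Nat.div_lt_iff_lt_mul hn0).mpr hd⟩ ⟨d.1 % (2 ^ t - 1), Nat.mod_lt _ hn0⟩ = d :=
            Fin.ext (by simp only [emb]; rw [Nat.mul_comm, Nat.div_add_mod])
          exact (emb_inj (hj.trans hde.symm)).1
      · refine ⟨⟨0, hm⟩, fun i _ j hj => ?_⟩
        have h1 : (emb m (2 ^ t - 1) r i j).1 < m * (2 ^ t - 1) := by
          have hi : i.1 + 1 ≤ m := i.2
          have hjj : j.1 < (2 ^ t - 1) := j.2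
          show i.1 * (2 ^ t - 1) + j.1 < m * (2 ^ t - 1)
          calc i.1 * (2 ^ t - 1) + j.1 < (i.1 + 1) * (2 ^ t - 1) := by nlinarith
            _ ≤ m * (2 ^ t - 1) := Nat.mul_le_mul_right _ hi
        rw [hj] at h1
        exact hd h1
    -- the directions of the cube
    set dir : Fin m → Fin (m * (2 ^ t - 1) + r) :=
      fun i => if i = i₀ then d else emb m (2 ^ t - 1) r i (δ i) with hdirdef
    have hdir₀ : dir i₀ = d := if_pos rfl
    have hdir₁ : ∀ i, i ≠ i₀ → dir i = emb m (2 ^ t - 1) r i (δ i) := fun i hi => if_neg hi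
    have hdirinj : Function.Injective dir := by
      intro a b hab
      by_cases ha : a = i₀ <;> by_cases hb : b = i₀
      · rw [ha, hb]
      · exfalso
        rw [ha, hdir₀, hdir₁ b hb] at hab
        exact hK1 b hb (δ b) hab.symm
      · exfalso
        rw [hb, hdir₀, hdir₁ a ha] at hab
        exact hK1 a ha (δ a) hab
      · rw [hdir₁ a ha, hdir₁ b hb] at hab
        exact (emb_inj hab).1
    set f := cubeF x dir with hfdef
    have hfapp : ∀ ε j, f ε j = x j + sumv dir ε j := fun _ _ => rfl
    have hf0 : f 0 = x := funext fun j => by rw [hfapp, sumv_zero, add_zero]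
    have hstep : ∀ ε i₁, f (ε + Pi.single i₁ 1) = f ε + Pi.single (dir i₁) 1 := by
      intro ε i₁
      funext j
      rw [Pi.add_apply, hfapp, hfapp, sumv_add_single, Pi.single_apply, ← add_assoc]
      congr 1
      by_cases h : dir i₁ = j
      · simp [h]
      · simp [h, Ne.symm h]
    have hblock : ∀ (ε : Fin m → ZMod 2) (i : Fin m), i ≠ i₀ → ε i = 1 →
        block m (2 ^ t - 1) r (f ε) i ∈ C := by
      intro ε i hi hε
      have hb : block m (2 ^ t - 1) r (f ε) i = block m (2 ^ t - 1) r x i + Pi.single (δ i) 1 := by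
        funext j
        rw [block_apply, hfapp, Pi.add_apply, block_apply]
        congr 1
        by_cases hj : j = δ i
        · subst hj
          rw [← hdir₁ i hi, sumv_eval dir hdirinj, hε, Pi.single_eq_same]
        · rw [Pi.single_eq_of_ne hj, sumv_eval_ne]
          intro i'
          by_cases hi' : i' = i₀
          · rw [hi', hdir₀]
            exact fun h => hK1 i hi j h.symm
          · rw [hdir₁ i' hi']
            intro h
            obtain ⟨h1, h2⟩ := emb_inj h
            exact hj (h1 ▸ h2).symm
      rw [hb]
      exact hδ i
    have hfinj : Function.Injective f := by
      intro a b hab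
      funext i
      have h := congrFun hab (dir i)
      rw [hfapp, hfapp, sumv_eval dir hdirinj, sumv_eval dir hdirinj] at h
      exact add_left_cancel h
    have hz2 : ∀ a : ZMod 2, a ≠ 1 → a = 0 := by decide
    have hz3 : ∀ a : ZMod 2, a = 0 ∨ a = 1 := by decide
    refine ⟨f, ⟨hfinj, ?_⟩, ?_⟩
    · -- every cube edge lands in G ⊔ {e}
      intro ε ε' hadj
      obtain ⟨i₁, rfl⟩ := (hamming_one_iff ε ε').mp (Qc_adj.mp hadj)
      have hQ : (Qc (m * (2 ^ t - 1) + r)).Adj (f ε) (f (ε + Pi.single i₁ 1)) := by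
        rw [Qc_adj, hamming_one_iff]
        exact ⟨dir i₁, hstep ε i₁⟩
      by_cases hA : ∃ i, i ≠ i₀ ∧ ε i = 1
      · obtain ⟨i, hi, hεi⟩ := hA
        left
        rw [SimpleGraph.fromRel_adj]
        exact ⟨hQ.ne, Or.inl ⟨hQ, Or.inl ⟨i, hblock ε i hi hεi⟩⟩⟩
      · by_cases hA' : ∃ i, i ≠ i₀ ∧ (ε + Pi.single i₁ 1 : Fin m → ZMod 2) i = 1
        · obtain ⟨i, hi, hεi⟩ := hA'
          left
          rw [SimpleGraph.fromRel_adj]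
          exact ⟨hQ.ne, Or.inl ⟨hQ, Or.inr ⟨i, hblock _ i hi hεi⟩⟩⟩
        · push_neg at hA hA'
          have hz : ∀ i, i ≠ i₀ → ε i = 0 := fun i hi => hz2 _ (hA i hi)
          have hz' : ∀ i, i ≠ i₀ → (ε + Pi.single i₁ 1 : Fin m → ZMod 2) i = 0 :=
            fun i hi => hz2 _ (hA' i hi)
          have hi₁ : i₁ = i₀ := by
            by_contra hi₁
            have h1 := hz i₁ hi₁
            have h2 := hz' i₁ hi₁
            rw [Pi.add_apply, h1, Pi.single_eq_same, zero_add] at h2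
            exact one_ne_zero h2
          have hi₁' := hi₁.symm
          subst hi₁'
          right
          rw [SimpleGraph.fromEdgeSet_adj]
          refine ⟨?_, hQ.ne⟩
          rcases hz3 (ε i₀) with h0 | h0
          · have hε0 : ε = 0 := by
              funext i
              by_cases hi : i = i₀
              · rw [hi]; exact h0
              · exact hz i hi
            have h1 : f ε = x := by rw [hε0, hf0]
            have h2 : f (ε + Pi.single i₀ 1) = y := by
              rw [hstep, h1, hdir₀, ← hyd]
            rw [h1, h2]
            rfl
          · have hε1 : ε = 0 + Pi.single i₀ 1 := by
              funext i
              by_cases hi : i = i₀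
              · rw [hi, Pi.add_apply, Pi.zero_apply, Pi.single_eq_same, zero_add]; exact h0
              · rw [Pi.add_apply, Pi.zero_apply, Pi.single_eq_of_ne hi, zero_add]
                exact hz i hi
            have h1 : f ε = y := by
              rw [hε1, hstep, hf0, hdir₀, ← hyd]
            have h2 : ε + Pi.single i₀ 1 = 0 := by
              funext i
              by_cases hi : i = i₀
              · rw [hi, Pi.add_apply, Pi.single_eq_same, h0]; rfl
              · rw [Pi.add_apply, Pi.single_eq_of_ne hi, hz i hi, add_zero]; rfl
            have h3 : f (ε + Pi.single i₀ 1) = x := by rw [h2, hf0]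
            rw [h1, h3]
            exact Set.mem_singleton_iff.mpr (Sym2.eq_swap)
    · -- not a copy in G itself
      rintro ⟨-, hedges⟩
      have hadj01 : (Qc m).Adj 0 (0 + Pi.single i₀ 1) := by
        rw [Qc_adj, hamming_one_iff]
        exact ⟨i₀, rfl⟩
      have h := hedges _ _ hadj01
      rw [hf0] at h
      have hfy : f (0 + Pi.single i₀ 1) = y := by
        rw [hstep, hf0, hdir₀, ← hyd]
      rw [hfy, SimpleGraph.fromRel_adj] at h
      exact hge h
end

section
/- For each i ∈ {1,...,m+1}, let A_i be the subgraph of Q_n consisting of all edges whose lower-weight endpoint has weight congruent to one of i, i+1, ..., i+m−2 modulo m+1. Then every copy of Q_{m−1} in Q_n is contained in A_i for some i. -/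
/-- The graph `A_i ⊆ Q_n`: all edges whose lower-weight endpoint has weight congruent to
one of `i, i+1, …, i+m−2` modulo `m+1`. -/
def Agraph (n m i : ℕ) : SimpleGraph (Fin n → ZMod 2) :=
  SimpleGraph.fromRel (fun x y =>
    (Qc n).Adj x y ∧ hammingDist x 0 < hammingDist y 0 ∧
      ∃ k < m - 1, hammingDist x 0 % (m + 1) = (i + k) % (m + 1))

/-- Weights of vertices at Hamming distance 1 differ by exactly one. -/
lemma weight_step {N : ℕ} {a b : Fin N → ZMod 2} (h : hammingDist a b = 1) :
    hammingDist a 0 + 1 = hammingDist b 0 ∨ hammingDist b 0 + 1 = hammingDist a 0 := by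
  rw [hammingDist, Finset.card_eq_one] at h
  obtain ⟨j, hj⟩ := h
  have hmem : ∀ k, a k ≠ b k ↔ k = j := by
    intro k
    have := Finset.ext_iff.mp hj k
    simpa using this
  have hjne : a j ≠ b j := (hmem j).mpr rfl
  have hagree : ∀ k, k ≠ j → a k = b k := fun k hk =>
    by_contra fun h2 => hk ((hmem k).mp h2)
  have hcases : ∀ x : ZMod 2, x = 0 ∨ x = 1 := by decide
  have key : ∀ (u v : Fin N → ZMod 2), u j = 0 → v j ≠ 0 → (∀ k, k ≠ j → u k = v k) →
      hammingDist u 0 + 1 = hammingDist v 0 := by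
    intro u v hu hv huv
    have hset : (Finset.univ.filter (fun i => v i ≠ (0 : Fin N → ZMod 2) i)) =
        insert j (Finset.univ.filter (fun i => u i ≠ (0 : Fin N → ZMod 2) i)) := by
      ext k
      by_cases hk : k = j
      · subst hk; simp [hv]
      · simp [hk, huv k hk]
    have hjnot : j ∉ Finset.univ.filter (fun i => u i ≠ (0 : Fin N → ZMod 2) i) := by
      simp [hu]
    rw [hammingDist, hammingDist, hset, Finset.card_insert_of_notMem hjnot]
  rcases hcases (a j) with ha | ha
  · left
    exact key a b ha (fun h2 => hjne (ha.trans h2.symm)) hagree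
  · right
    have hb : b j = 0 := by
      rcases hcases (b j) with h | h
      · exact h
      · exact absurd (ha.trans h.symm) hjne
    exact key b a hb (by rw [ha]; exact one_ne_zero) (fun k hk => (hagree k hk).symm)

lemma qc_adj_dist {N : ℕ} {a b : Fin N → ZMod 2} (h : (Qc N).Adj a b) :
    hammingDist a b = 1 := by
  rw [Qc, SimpleGraph.fromRel_adj] at h
  rcases h.2 with h1 | h1
  · exact h1
  · rw [hammingDist_comm]; exact h1

/-- A cube homomorphism moves weights by at most the cube distance. -/
lemma walk_bound {N M : ℕ} (f : (Fin M → ZMod 2) → (Fin N → ZMod 2))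
    (hadj : ∀ x y, (Qc M).Adj x y → (Qc N).Adj (f x) (f y)) (x y : Fin M → ZMod 2) :
    hammingDist (f y) 0 ≤ hammingDist (f x) 0 + hammingDist x y := by
  generalize hd : hammingDist x y = d
  induction d generalizing x with
  | zero =>
    rw [hammingDist_eq_zero] at hd
    subst hd; simp
  | succ d ih =>
    have hpos : (Finset.univ.filter (fun i => x i ≠ y i)).Nonempty := by
      rw [← Finset.card_pos, ← hammingDist]; omega
    obtain ⟨j, hj⟩ := hpos
    have hjne : x j ≠ y j := by simpa using hj
    set x' := Function.update x j (y j) with hx'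
    have hdist1 : hammingDist x x' = 1 := by
      rw [hammingDist, Finset.card_eq_one]
      refine ⟨j, ?_⟩
      ext k
      by_cases hk : k = j
      · subst hk; simp [hx', Function.update_self, hjne]
      · simp [hx', Function.update_of_ne hk, hk]
    have hdist' : hammingDist x' y = d := by
      have hthis : (Finset.univ.filter (fun i => x' i ≠ y i)) =
          (Finset.univ.filter (fun i => x i ≠ y i)).erase j := by
        ext k
        by_cases hk : k = j
        · subst hk; simp [hx', Function.update_self]
        · simp [hx', Function.update_of_ne hk, hk]
      rw [hammingDist, hthis, Finset.card_erase_of_mem hj, ← hammingDist, hd]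
      omega
    have hadjxx' : (Qc M).Adj x x' := by
      rw [Qc, SimpleGraph.fromRel_adj]
      refine ⟨?_, Or.inl hdist1⟩
      intro h
      have : x j = x' j := congrFun h j
      rw [hx', Function.update_self] at this
      exact hjne this
    have h1 : hammingDist (f x) (f x') = 1 := qc_adj_dist (hadj _ _ hadjxx')
    have h2 := weight_step h1
    have h3 := ih x' hdist'
    omega

/-- Every copy of `Q_{m−1}` in `Q_n` is contained in `A_i` for some `i ∈ {1, …, m+1}`. -/
theorem stmt_17 (n m : ℕ) (f : (Fin (m - 1) → ZMod 2) → (Fin n → ZMod 2))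
    (hf : IsCubeCopy (m - 1) (Qc n) f) :
    ∃ i : ℕ, 1 ≤ i ∧ i ≤ m + 1 ∧ IsCubeCopy (m - 1) (Agraph n m i) f := by
  obtain ⟨hinj, hadj⟩ := hf
  obtain ⟨x0, hx0⟩ := Finite.exists_min (fun x => hammingDist (f x) 0)
  set w := hammingDist (f x0) 0 with hw
  have hmodlt : w % (m + 1) < m + 1 := Nat.mod_lt w (by omega)
  refine ⟨if w % (m+1) = 0 then m+1 else w % (m+1), by split <;> omega,
    by split <;> omega, hinj, ?_⟩
  set i := if w % (m+1) = 0 then m+1 else w % (m+1) with hi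
  have himod : i % (m + 1) = w % (m + 1) := by
    rw [hi]; split
    · rw [Nat.mod_self]; omega
    · exact Nat.mod_mod_of_dvd w (dvd_refl (m+1))
  intro x y hxy
  -- m ≥ 2 since there is an edge in Q_{m-1}
  have hm2 : 2 ≤ m := by
    by_contra hm
    have hm1 : m - 1 = 0 := by omega
    have : x = y := by
      funext k
      exact absurd (hm1 ▸ k.2 : (k : ℕ) < 0) (by omega)
    exact hxy.ne this
  have hdist1 : hammingDist (f x) (f y) = 1 := qc_adj_dist (hadj _ _ hxy)
  have hwx : w ≤ hammingDist (f x) 0 := hx0 x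
  have hwy : w ≤ hammingDist (f y) 0 := hx0 y
  have hbx : hammingDist (f x) 0 ≤ w + hammingDist x0 x := walk_bound f hadj x0 x
  have hby : hammingDist (f y) 0 ≤ w + hammingDist x0 y := walk_bound f hadj x0 y
  have hcx : hammingDist x0 x ≤ m - 1 := by
    calc hammingDist x0 x ≤ Fintype.card (Fin (m-1)) := hammingDist_le_card_fintype
    _ = m - 1 := by simp
  have hcy : hammingDist x0 y ≤ m - 1 := by
    calc hammingDist x0 y ≤ Fintype.card (Fin (m-1)) := hammingDist_le_card_fintype
    _ = m - 1 := by simp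
  have hstep := weight_step hdist1
  have hne : f x ≠ f y := fun h => hxy.ne (hinj h)
  rw [Agraph, SimpleGraph.fromRel_adj]
  refine ⟨hne, ?_⟩
  have hadjn : (Qc n).Adj (f x) (f y) := hadj _ _ hxy
  have hcong : ∀ a : ℕ, w ≤ a → a % (m+1) = (i + (a - w)) % (m+1) := by
    intro a haw
    have : i + (a - w) ≡ w + (a - w) [MOD m+1] :=
      Nat.ModEq.add_right _ (by unfold Nat.ModEq; omega)
    have h2 : w + (a - w) = a := by omega
    rw [h2] at this
    exact this.symm
  rcases hstep with hs | hs
  · left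
    refine ⟨hadjn, by omega, hammingDist (f x) 0 - w, by omega, hcong _ hwx⟩
  · right
    refine ⟨hadjn.symm, by omega, hammingDist (f y) 0 - w, by omega, hcong _ hwy⟩
end
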